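/- Let ψ ∈ L¹(ℝ²) ∩ L²(ℝ²) be compactly supported with ‖ψ‖_{L¹} ≤ 1, let c > 0, let f ∈ L^∞(ℝ²) with ‖f‖_∞ ≤ 1, and let F ⊂ ℝ² be a finite set of points. Then there exists C > 0, depending only on c, supp ψ and the cardinality of F, such that for every 0 < ε < 1 the number of indices λ = (j,k,m) with j ≥ 0, |k| ≤ ⌈2^{j/2}⌉, m ∈ ℤ², supp ψ_λ ∩ F ≠ ∅ and |⟨f, ψ_λ⟩| > ε is at most C·ε^{−2/3}. -/

import Mathlib

/-!
Because `‖f‖_∞ ≤ 1` and `‖ψ_{j,k,m}‖_{L¹} = 2^{-3j/4} ‖ψ‖_{L¹} ≤ 2^{-3j/4}`, a coefficient larger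
than `ε` forces `2^{j/2} < ε^{-2/3}`. If `supp ψ ⊆ B(0,R)` and a corner point `y` lies in
`supp ψ_{j,k,m}`, then `c m` lies within `R` of `S_k A_{2^j} y`, which leaves at most
`(2R/c + 1)²` translations `m` for each `y`, `j`, `k`; there are at most `5 · 2^{j/2}` shears `k`.
Summing the geometric series `∑_{2^{j/2} < ε^{-2/3}} 2^{j/2} ≤ 4 ε^{-2/3}` over the scales and
multiplying by `|F|` gives the bound.
-/

noncomputable section

open MeasureTheory Real Set

/-- The plane `ℝ²`. -/
abbrev R2 := ℝ × ℝ

/-- The unit square `[0,1]²`. -/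
def unitSq : Set R2 := Set.Icc (0:ℝ) 1 ×ˢ Set.Icc (0:ℝ) 1

/-- The shearlet `ψ_{j,k,m}(x) = 2^{3j/4} ψ(S_k A_{2^j} x − c m)`, where
`A_{2^j} = diag(2^j, 2^{j/2})` and `S_k = [[1,k],[0,1]]`. -/
def shearlet (ψ : R2 → ℂ) (c : ℝ) (j k : ℤ) (m : ℤ × ℤ) : R2 → ℂ :=
  fun x => (((2:ℝ) ^ (3 * (j:ℝ) / 4) : ℝ) : ℂ) *
    ψ ((2:ℝ) ^ (j:ℝ) * x.1 + (k : ℝ) * (2:ℝ) ^ ((j:ℝ)/2) * x.2 - c * m.1,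
       (2:ℝ) ^ ((j:ℝ)/2) * x.2 - c * m.2)

/-- The `L²(ℝ²)` inner product `⟨f,g⟩ = ∫ f ḡ`. -/
def ip (f g : R2 → ℂ) : ℂ := ∫ x : R2, f x * (starRingEnd ℂ) (g x)

/-- Valid horizontal shearlet indices `λ = (j,k,m)`: `j ≥ 0` and `|k| ≤ ⌈2^{j/2}⌉`. -/
def validH (l : ℤ × ℤ × (ℤ × ℤ)) : Prop :=
  0 ≤ l.1 ∧ |l.2.1| ≤ ⌈(2:ℝ) ^ ((l.1:ℝ)/2)⌉

def shearMap (a b d : ℝ) : R2 →ₗ[ℝ] R2 where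
  toFun x := (a * x.1 + b * x.2, d * x.2)
  map_add' x y := by ext <;> simp only [Prod.fst_add, Prod.snd_add] <;> ring
  map_smul' r x := by
    ext <;> simp only [Prod.smul_fst, Prod.smul_snd, smul_eq_mul, RingHom.id_apply] <;> ring

@[simp]
lemma shearMap_apply (a b d : ℝ) (x : R2) :
    shearMap a b d x = (a * x.1 + b * x.2, d * x.2) := rfl

lemma det_shearMap (a b d : ℝ) : LinearMap.det (shearMap a b d) = a * d := by
  rw [← LinearMap.det_toMatrix (Module.Basis.finTwoProd ℝ), Matrix.det_fin_two]
  simp [LinearMap.toMatrix_apply]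

section ChangeOfVariables

variable {E : Type*} [NormedAddCommGroup E] {a b d : ℝ}

lemma map_shearMap_add_volume (had : a * d ≠ 0) (v : R2) :
    Measure.map (fun x => shearMap a b d x + v) volume = ENNReal.ofReal |a * d|⁻¹ • volume := by
  have hdet : LinearMap.det (shearMap a b d) ≠ 0 := by rwa [det_shearMap]
  change Measure.map ((· + v) ∘ shearMap a b d) volume = _
  rw [← Measure.map_map (measurable_add_const v)
      (shearMap a b d).continuous_of_finiteDimensional.measurable,
    Measure.map_linearMap_addHaar_eq_smul_addHaar volume hdet, Measure.map_smul,
    map_add_right_eq_self, det_shearMap, abs_inv]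

lemma measurable_shearMap_add (v : R2) : Measurable fun x => shearMap a b d x + v :=
  (shearMap a b d).continuous_of_finiteDimensional.measurable.add_const v

lemma MeasureTheory.Integrable.comp_shearMap_add {g : R2 → E} (hg : Integrable g)
    (had : a * d ≠ 0) (v : R2) : Integrable fun x => g (shearMap a b d x + v) := by
  have hmap : Integrable g (Measure.map (fun x => shearMap a b d x + v) volume) := by
    rw [map_shearMap_add_volume had]
    exact hg.smul_measure ENNReal.ofReal_ne_top
  exact (integrable_map_measure hmap.aestronglyMeasurable
    (measurable_shearMap_add v).aemeasurable).mp hmap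

lemma integral_comp_shearMap_add [NormedSpace ℝ E] {g : R2 → E} (hg : AEStronglyMeasurable g)
    (had : a * d ≠ 0) (v : R2) : ∫ x, g (shearMap a b d x + v) = |a * d|⁻¹ • ∫ x, g x := by
  have hmap : AEStronglyMeasurable g (Measure.map (fun x => shearMap a b d x + v) volume) := by
    rw [map_shearMap_add_volume had]
    exact hg.mono_ac Measure.smul_absolutelyContinuous
  rw [← integral_map (measurable_shearMap_add v).aemeasurable hmap, map_shearMap_add_volume had,
    integral_smul_measure, ENNReal.toReal_ofReal (by positivity)]

end ChangeOfVariables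

/-- `S_k A_{2^j}`. -/
abbrev shearDilation (j k : ℤ) : R2 →ₗ[ℝ] R2 :=
  shearMap (2 ^ (j : ℝ)) (k * 2 ^ ((j : ℝ) / 2)) (2 ^ ((j : ℝ) / 2))

section Shearlet

variable (ψ : R2 → ℂ) (c : ℝ) (j k : ℤ) (m : ℤ × ℤ)

lemma shearDilation_det_ne_zero : 2 ^ (j : ℝ) * 2 ^ ((j : ℝ) / 2) ≠ (0 : ℝ) := by positivity

lemma shearlet_apply (x : R2) : shearlet ψ c j k m x =
    ((2 ^ (3 * (j : ℝ) / 4) : ℝ) : ℂ) * ψ (shearDilation j k x + -(c * m.1, c * m.2)) := by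
  simp only [shearlet, shearMap_apply, Prod.neg_mk, Prod.mk_add_mk, sub_eq_add_neg, mul_assoc]

lemma integrable_shearlet {ψ} (hψ : Integrable ψ) : Integrable (shearlet ψ c j k m) := by
  simp_rw [funext (shearlet_apply ψ c j k m)]
  exact (hψ.comp_shearMap_add (shearDilation_det_ne_zero j) _).const_mul _

lemma integral_norm_shearlet {ψ} (hψ : Integrable ψ) :
    ∫ x, ‖shearlet ψ c j k m x‖ = 2 ^ (-(3 * (j : ℝ)) / 4) * ∫ x, ‖ψ x‖ := by
  simp_rw [shearlet_apply, norm_mul, Complex.norm_real, Real.norm_eq_abs,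
    abs_of_pos (by positivity : (0 : ℝ) < 2 ^ (3 * (j : ℝ) / 4))]
  rw [integral_const_mul, integral_comp_shearMap_add hψ.norm.aestronglyMeasurable
    (shearDilation_det_ne_zero j), smul_eq_mul, ← mul_assoc, abs_of_pos (by positivity),
    ← Real.rpow_add two_pos, ← Real.rpow_neg two_pos.le, ← Real.rpow_add two_pos]
  ring_nf

lemma tsupport_shearlet_subset :
    tsupport (shearlet ψ c j k m) ⊆
      (fun x => shearDilation j k x + -(c * m.1, c * m.2)) ⁻¹' tsupport ψ := by
  refine closure_minimal (fun x hx => subset_closure ?_)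
    (isClosed_tsupport ψ |>.preimage (by fun_prop))
  exact right_ne_zero_of_mul (by rwa [← shearlet_apply])

end Shearlet

lemma MeasureTheory.MemLp.ae_norm_le_toReal_eLpNorm_top {α E : Type*} [MeasurableSpace α]
    {μ : Measure α} [NormedAddCommGroup E] {f : α → E} (hf : MemLp f ⊤ μ) :
    ∀ᵐ x ∂μ, ‖f x‖ ≤ (eLpNorm f ⊤ μ).toReal := by
  filter_upwards [enorm_ae_le_eLpNormEssSup f μ] with x hx
  rw [eLpNorm_exponent_top]
  exact (ENNReal.toReal_mono (by simpa using hf.eLpNorm_ne_top) hx).trans_eq' (by simp)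

lemma norm_ip_le_integral_norm {f g : R2 → ℂ} (hg : Integrable g) (hf : ∀ᵐ x, ‖f x‖ ≤ 1) :
    ‖ip f g‖ ≤ ∫ x, ‖g x‖ := by
  refine norm_integral_le_of_norm_le hg.norm ?_
  filter_upwards [hf] with x hx
  rw [norm_mul, RCLike.norm_conj]
  exact mul_le_of_le_one_left (norm_nonneg _) hx

lemma norm_ip_shearlet_le {ψ : R2 → ℂ} (hψ : Integrable ψ) (hψnorm : ∫ x, ‖ψ x‖ ≤ 1)
    {f : R2 → ℂ} (hf : MemLp f ⊤ volume) (hf1 : (eLpNorm f ⊤ volume).toReal ≤ 1)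
    (c : ℝ) (j k : ℤ) (m : ℤ × ℤ) :
    ‖ip f (shearlet ψ c j k m)‖ ≤ 2 ^ (-(3 * (j : ℝ)) / 4) := calc
  _ ≤ ∫ x, ‖shearlet ψ c j k m x‖ :=
    norm_ip_le_integral_norm (integrable_shearlet c j k m hψ)
      (hf.ae_norm_le_toReal_eLpNorm_top.mono fun _ hx => hx.trans hf1)
  _ ≤ 2 ^ (-(3 * (j : ℝ)) / 4) := by
    rw [integral_norm_shearlet c j k m hψ]
    exact mul_le_of_le_one_right (by positivity) hψnorm

lemma two_rpow_half_lt_of_lt_two_rpow {ε t : ℝ} (hε : 0 < ε) (h : ε < 2 ^ (-(3 * t) / 4)) :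
    (2 : ℝ) ^ (t / 2) < ε ^ (-(2 : ℝ) / 3) := by
  have h2 : (2 : ℝ) ^ (t / 2) = (2 ^ (-(3 * t) / 4)) ^ (-(2 : ℝ) / 3) := by
    rw [← rpow_mul zero_le_two]; ring_nf
  rw [h2]
  exact rpow_lt_rpow_of_neg hε h (by norm_num)

lemma two_rpow_natCast_div_two (n : ℕ) : (2 : ℝ) ^ ((n : ℝ) / 2) = √2 ^ n := by
  rw [sqrt_eq_rpow, ← rpow_natCast, ← rpow_mul zero_le_two]; ring_nf

lemma finite_setOf_pow_lt {r : ℝ} (hr : 1 < r) (X : ℝ) : {n : ℕ | r ^ n < X}.Finite := by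
  have h := (tendsto_pow_atTop_atTop_of_one_lt hr).eventually_ge_atTop X
  rw [← Nat.cofinite_eq_atTop] at h
  simpa using Filter.eventually_cofinite.1 h

lemma sum_pow_le_of_forall_pow_le {r X : ℝ} (hr : 1 < r) (hX : 0 ≤ X) {S : Finset ℕ}
    (hS : ∀ n ∈ S, r ^ n ≤ X) : ∑ n ∈ S, r ^ n ≤ r / (r - 1) * X := by
  have hr1 : 0 < r - 1 := sub_pos.2 hr
  rcases S.eq_empty_or_nonempty with rfl | hne
  · rw [Finset.sum_empty]; positivity
  set N := S.max' hne
  calc ∑ n ∈ S, r ^ n ≤ ∑ n ∈ Finset.range (N + 1), r ^ n :=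
        Finset.sum_le_sum_of_subset_of_nonneg
          (fun n hn => Finset.mem_range.2 (Nat.lt_succ_of_le (S.le_max' n hn)))
          (fun n _ _ => by positivity)
    _ = (r ^ (N + 1) - 1) / (r - 1) := geom_sum_eq hr.ne' _
    _ ≤ r / (r - 1) * r ^ N := by rw [pow_succ]; field_simp; linarith
    _ ≤ r / (r - 1) * X := by gcongr; exact hS N (S.max'_mem hne)

lemma natCast_card_Icc_eq_max (p q : ℤ) :
    ((Finset.Icc p q).card : ℝ) = max ((q : ℝ) + 1 - p) 0 := by
  rw [Int.card_Icc, ← Int.cast_natCast, Int.toNat_eq_max]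
  push_cast
  rfl

lemma card_Icc_neg_ceil_le {x : ℝ} (hx : 1 ≤ x) :
    ((Finset.Icc (-⌈x⌉) ⌈x⌉).card : ℝ) ≤ 5 * x := by
  rw [natCast_card_Icc_eq_max]
  push_cast
  exact max_le (by linarith [Int.ceil_lt_add_one x]) (by linarith)

def intsNear (c R u : ℝ) : Finset ℤ := Finset.Icc ⌈(u - R) / c⌉ ⌊(u + R) / c⌋

lemma mem_intsNear {c : ℝ} (hc : 0 < c) {R u : ℝ} {m : ℤ} :
    m ∈ intsNear c R u ↔ |u - c * m| ≤ R := by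
  rw [intsNear, Finset.mem_Icc, Int.ceil_le, Int.le_floor, div_le_iff₀ hc, le_div_iff₀ hc,
    abs_le]
  constructor <;> rintro ⟨h1, h2⟩ <;> constructor <;> linarith

lemma card_intsNear_le {c R : ℝ} (hc : 0 < c) (hR : 0 ≤ R) (u : ℝ) :
    ((intsNear c R u).card : ℝ) ≤ 2 * R / c + 1 := by
  have hwidth : (u + R) / c - (u - R) / c = 2 * R / c := by ring
  rw [intsNear, natCast_card_Icc_eq_max]
  exact max_le (by linarith [Int.floor_le ((u + R) / c), Int.le_ceil ((u - R) / c)])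
    (by positivity)

def translationBox (c R : ℝ) (z : R2) : Finset (ℤ × ℤ) :=
  intsNear c R z.1 ×ˢ intsNear c R z.2

lemma mem_translationBox {c : ℝ} (hc : 0 < c) {R : ℝ} {z : R2} {m : ℤ × ℤ} :
    m ∈ translationBox c R z ↔ ‖z - (c * m.1, c * m.2)‖ ≤ R := by
  simp [translationBox, mem_intsNear hc, Prod.norm_def]

lemma card_translationBox_le {c R : ℝ} (hc : 0 < c) (hR : 0 ≤ R) (z : R2) :
    ((translationBox c R z).card : ℝ) ≤ (2 * R / c + 1) ^ 2 := by
  rw [translationBox, Finset.card_product, Nat.cast_mul, sq]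
  exact mul_le_mul (card_intsNear_le hc hR _) (card_intsNear_le hc hR _) (by positivity)
    (by positivity)

def cornerCover (c R : ℝ) (F : Finset R2) (S : Finset ℕ) : Finset (ℤ × ℤ × (ℤ × ℤ)) :=
  F.biUnion fun y => S.biUnion fun n =>
    (Finset.Icc (-⌈√2 ^ n⌉) ⌈√2 ^ n⌉).biUnion fun k =>
      (translationBox c R (shearDilation n k y)).image fun m => ((n : ℤ), k, m)

lemma card_cornerCover_le {c R : ℝ} (hc : 0 < c) (hR : 0 ≤ R) (F : Finset R2) (S : Finset ℕ) :
    ((cornerCover c R F S).card : ℝ) ≤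
      F.card * (5 * (2 * R / c + 1) ^ 2 * ∑ n ∈ S, √2 ^ n) := by
  have hcount : (cornerCover c R F S).card ≤ ∑ y ∈ F, ∑ n ∈ S,
      ∑ k ∈ Finset.Icc (-⌈√2 ^ n⌉) ⌈√2 ^ n⌉, (translationBox c R (shearDilation n k y)).card :=
    Finset.card_biUnion_le.trans <| Finset.sum_le_sum fun _ _ =>
      Finset.card_biUnion_le.trans <| Finset.sum_le_sum fun _ _ =>
        Finset.card_biUnion_le.trans <| Finset.sum_le_sum fun _ _ => Finset.card_image_le
  have hscale (y : R2) (n : ℕ) :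
      ∑ k ∈ Finset.Icc (-⌈√2 ^ n⌉) ⌈√2 ^ n⌉, ((translationBox c R (shearDilation n k y)).card : ℝ)
        ≤ 5 * (2 * R / c + 1) ^ 2 * √2 ^ n := by
    have hshears := card_Icc_neg_ceil_le (one_le_pow₀ one_lt_sqrt_two.le (n := n))
    calc _ ≤ ∑ _k ∈ Finset.Icc (-⌈√2 ^ n⌉) ⌈√2 ^ n⌉, (2 * R / c + 1) ^ 2 :=
          Finset.sum_le_sum fun _ _ => card_translationBox_le hc hR _
      _ ≤ 5 * √2 ^ n * (2 * R / c + 1) ^ 2 := by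
        rw [Finset.sum_const, nsmul_eq_mul]; gcongr
      _ = 5 * (2 * R / c + 1) ^ 2 * √2 ^ n := by ring
  calc ((cornerCover c R F S).card : ℝ)
      ≤ ∑ y ∈ F, ∑ n ∈ S, 5 * (2 * R / c + 1) ^ 2 * √2 ^ n := by
        refine (Nat.cast_le.2 hcount).trans ?_
        push_cast
        exact Finset.sum_le_sum fun y _ => Finset.sum_le_sum fun n _ => hscale y n
    _ = F.card * (5 * (2 * R / c + 1) ^ 2 * ∑ n ∈ S, √2 ^ n) := by
        rw [Finset.sum_const, nsmul_eq_mul, ← Finset.mul_sum]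

lemma setOf_large_coeff_subset_cornerCover {c R : ℝ} (hc : 0 < c) {ψ : R2 → ℂ}
    (hR : tsupport ψ ⊆ Metric.closedBall 0 R) (hψ : Integrable ψ) (hψnorm : ∫ x, ‖ψ x‖ ≤ 1)
    {f : R2 → ℂ} (hf : MemLp f ⊤ volume) (hf1 : (eLpNorm f ⊤ volume).toReal ≤ 1)
    {ε : ℝ} (hε : 0 < ε) (F : Finset R2) {S : Finset ℕ}
    (hS : ∀ n : ℕ, √2 ^ n < ε ^ (-(2 : ℝ) / 3) → n ∈ S) :
    {l : ℤ × ℤ × (ℤ × ℤ) | validH l ∧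
      (∃ y ∈ F, y ∈ tsupport (shearlet ψ c l.1 l.2.1 l.2.2)) ∧
      ε < ‖ip f (shearlet ψ c l.1 l.2.1 l.2.2)‖} ⊆ cornerCover c R F S := by
  rintro ⟨j, k, m⟩ ⟨⟨hj, hk⟩, ⟨y, hyF, hy⟩, hlarge⟩
  lift j to ℕ using hj
  have hscale : √2 ^ j < ε ^ (-(2 : ℝ) / 3) := by
    have := hlarge.trans_le (norm_ip_shearlet_le hψ hψnorm hf hf1 c j k m)
    rw [Int.cast_natCast] at this
    rw [← two_rpow_natCast_div_two]
    exact two_rpow_half_lt_of_lt_two_rpow hε this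
  have hm : m ∈ translationBox c R (shearDilation j k y) := by
    rw [mem_translationBox hc, ← dist_zero_right, sub_eq_add_neg]
    exact hR (tsupport_shearlet_subset ψ c j k m hy)
  rw [Int.cast_natCast, two_rpow_natCast_div_two] at hk
  exact Finset.mem_biUnion.2 ⟨y, hyF, Finset.mem_biUnion.2 ⟨j, hS j hscale,
    Finset.mem_biUnion.2 ⟨k, Finset.mem_Icc.2 (abs_le.1 hk), Finset.mem_image_of_mem _ hm⟩⟩⟩

theorem corner_point_coefficient_count_general
    (c : ℝ) (hc : 0 < c) (ψ : R2 → ℂ)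
    (hψs : HasCompactSupport ψ) (hψ1 : Integrable ψ)
    (hψnorm : (∫ x : R2, ‖ψ x‖) ≤ 1) (nF : ℕ) :
    ∃ C > 0, ∀ F : Finset R2, F.card = nF →
      ∀ f : R2 → ℂ, MemLp f ⊤ volume → (eLpNorm f ⊤ volume).toReal ≤ 1 →
      ∀ ε : ℝ, 0 < ε → ε < 1 →
        {l : ℤ × ℤ × (ℤ × ℤ) | validH l ∧
          (∃ y ∈ F, y ∈ tsupport (shearlet ψ c l.1 l.2.1 l.2.2)) ∧
          ε < ‖ip f (shearlet ψ c l.1 l.2.1 l.2.2)‖}.Finite ∧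
        (({l : ℤ × ℤ × (ℤ × ℤ) | validH l ∧
            (∃ y ∈ F, y ∈ tsupport (shearlet ψ c l.1 l.2.1 l.2.2)) ∧
            ε < ‖ip f (shearlet ψ c l.1 l.2.1 l.2.2)‖}.ncard : ℝ)
          ≤ C * ε ^ (-(2:ℝ)/3)) := by
  obtain ⟨R, hR0, hR⟩ := hψs.isBounded.subset_closedBall_lt 0 (0 : R2)
  refine ⟨20 * (nF + 1) * (2 * R / c + 1) ^ 2, by positivity, ?_⟩
  intro F hF f hf hf1 ε hε _
  set X := ε ^ (-(2 : ℝ) / 3)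
  set S := (finite_setOf_pow_lt one_lt_sqrt_two X).toFinset
  have hsub := setOf_large_coeff_subset_cornerCover hc hR hψ1 hψnorm hf hf1 hε F
    (S := S) fun n hn => (Set.Finite.mem_toFinset _).2 hn
  have hsum : ∑ n ∈ S, √2 ^ n ≤ 4 * X := by
    refine (sum_pow_le_of_forall_pow_le one_lt_sqrt_two (by positivity)
      fun n hn => ((Set.Finite.mem_toFinset _).1 hn).le).trans ?_
    gcongr
    rw [div_le_iff₀ (sub_pos.2 one_lt_sqrt_two)]
    nlinarith [sq_sqrt zero_le_two, sqrt_nonneg 2]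
  refine ⟨(cornerCover c R F S).finite_toSet.subset hsub, ?_⟩
  calc _ ≤ ((cornerCover c R F S).card : ℝ) := by
        exact_mod_cast (Set.ncard_le_ncard hsub (Finset.finite_toSet _)).trans_eq
          (Set.ncard_coe_finset _)
    _ ≤ nF * (5 * (2 * R / c + 1) ^ 2 * (4 * X)) := by
        rw [← hF]
        exact (card_cornerCover_le hc hR0.le F S).trans (by gcongr)
    _ = 20 * nF * (2 * R / c + 1) ^ 2 * X := by ring
    _ ≤ 20 * (nF + 1) * (2 * R / c + 1) ^ 2 * X := by gcongr; linarith

/-- **Lemma (corner-point count, Case 2b-1).** Let `ψ ∈ L¹ ∩ L²` be compactly supported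
with `‖ψ‖_{L¹} ≤ 1`, `c > 0`, and let `F` be a finite set of (corner) points. Then there
is `C > 0`, depending only on `c`, `supp ψ` and `|F|`, such that for every `f ∈ L^∞` with
`‖f‖_∞ ≤ 1` and every `0 < ε < 1`, the number of indices `λ = (j,k,m)` with `j ≥ 0`,
`|k| ≤ ⌈2^{j/2}⌉`, `supp ψ_λ ∩ F ≠ ∅` and `|⟨f,ψ_λ⟩| > ε` is at most `C · ε^{−2/3}`. -/
theorem corner_point_coefficient_count
    (c : ℝ) (hc : 0 < c) (ψ : R2 → ℂ)
    (hψs : HasCompactSupport ψ) (hψ1 : Integrable ψ) (hψ2 : MemLp ψ 2 volume)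
    (hψnorm : (∫ x : R2, ‖ψ x‖) ≤ 1) (nF : ℕ) :
    ∃ C > 0, ∀ F : Finset R2, F.card = nF →
      ∀ f : R2 → ℂ, MemLp f ⊤ volume → (eLpNorm f ⊤ volume).toReal ≤ 1 →
      ∀ ε : ℝ, 0 < ε → ε < 1 →
        {l : ℤ × ℤ × (ℤ × ℤ) | validH l ∧
          (∃ y ∈ F, y ∈ tsupport (shearlet ψ c l.1 l.2.1 l.2.2)) ∧
          ε < ‖ip f (shearlet ψ c l.1 l.2.1 l.2.2)‖}.Finite ∧
        (({l : ℤ × ℤ × (ℤ × ℤ) | validH l ∧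
            (∃ y ∈ F, y ∈ tsupport (shearlet ψ c l.1 l.2.1 l.2.2)) ∧
            ε < ‖ip f (shearlet ψ c l.1 l.2.1 l.2.2)‖}.ncard : ℝ)
          ≤ C * ε ^ (-(2:ℝ)/3)) :=
  corner_point_coefficient_count_general c hc ψ hψs hψ1 hψnorm nF
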